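/- arXiv:2107.06909 — 3 statements merged into one kernel-verified Lean document; each statement's English description precedes it below -/
import Mathlib

section
/- Let X and Y be topological spaces and let (H_i)_{i\ge 1} be continuous maps H_i : X \times [0,1] \to Y with H_i(x,1) = H_{i+1}(x,0) for all x and i. Suppose in addition that for every p \in X there exist an open neighborhood U of p and an integer N \ge 1 such that H_j(x,t) = H_N(x,0) for all j \ge N, all x \in U, and all t \in [0,1]. Then the map H : X \times [0,1) \to Y defined piecewise by H(x,t) = H_i(x,\zeta_i(t)) for t \in I_i extends to a continuous map \bar H : X \times [0,1] \to Y, where \bar H(x,1) = H_N(x,0) for any pair (U,N) as above with x \in U (this value is independent of the choice of such a pair). -/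
/-!
On `X × [0, 1)` the glued map is locally a finite concatenation of the maps `H_i`, which agree at
the common endpoints, so it is continuous there by pasting along closed sets. Near a point
`(p, 1)` the stabilization hypothesis makes the glued map equal to `(x, t) ↦ H_N(x, 0)` on
`U × [1 - 2^{-(N-1)}, 1]`, a neighbourhood of `(p, 1)` in `X × [0, 1]`, so the value `H_N(x, 0)`
at `t = 1` extends it continuously.
-/

open Set Filter Topology Function

noncomputable section

namespace DyadicGluing

/-- The paper's `I_{n+1}` is `[dyadicPt n, dyadicPt (n + 1)]` and its `ζ_{n+1}` is
`dyadicRescale n`. -/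
def dyadicPt (n : ℕ) : ℝ := 1 - (1 / 2) ^ n

def dyadicRescale (n : ℕ) (t : ℝ) : ℝ := 2 ^ (n + 1) * (t - dyadicPt n)

lemma dyadicPt_zero : dyadicPt 0 = 0 := by simp [dyadicPt]

lemma dyadicPt_strictMono : StrictMono dyadicPt := fun m n hmn => by
  have := pow_lt_pow_right_of_lt_one₀ (by norm_num : (0 : ℝ) < 1 / 2) (by norm_num) hmn
  unfold dyadicPt
  linarith

lemma dyadicPt_nonneg (n : ℕ) : 0 ≤ dyadicPt n :=
  dyadicPt_zero ▸ dyadicPt_strictMono.monotone n.zero_le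

lemma dyadicPt_lt_one (n : ℕ) : dyadicPt n < 1 := by
  unfold dyadicPt
  linarith [pow_pos (by norm_num : (0 : ℝ) < 1 / 2) n]

lemma exists_lt_dyadicPt {t : ℝ} (ht : t < 1) : ∃ n, t < dyadicPt n := by
  obtain ⟨n, hn⟩ := exists_pow_lt_of_lt_one (sub_pos.2 ht) (by norm_num : (1 / 2 : ℝ) < 1)
  exact ⟨n, by unfold dyadicPt; linarith⟩

lemma exists_lt_dyadicPt_succ {t : ℝ} (ht : t < 1) : ∃ n, t < dyadicPt (n + 1) :=
  let ⟨n, hn⟩ := exists_lt_dyadicPt ht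
  ⟨n, hn.trans (dyadicPt_strictMono n.lt_succ_self)⟩

lemma exists_mem_Ico_dyadicPt {t : ℝ} (h0 : 0 ≤ t) (h1 : t < 1) :
    ∃ n, t ∈ Ico (dyadicPt n) (dyadicPt (n + 1)) := by
  have h := exists_lt_dyadicPt_succ h1
  refine ⟨Nat.find h, ?_, Nat.find_spec h⟩
  cases hm : Nat.find h with
  | zero => rwa [dyadicPt_zero]
  | succ m => exact not_lt.1 (Nat.find_min h (hm ▸ m.lt_succ_self))

lemma dyadicRescale_dyadicPt (n : ℕ) : dyadicRescale n (dyadicPt n) = 0 := by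
  simp [dyadicRescale]

lemma dyadicRescale_dyadicPt_succ (n : ℕ) : dyadicRescale n (dyadicPt (n + 1)) = 1 := by
  have h : (2 : ℝ) ^ n * (1 / 2) ^ n = 1 := by rw [← mul_pow]; norm_num
  simp only [dyadicRescale, dyadicPt]
  rw [sub_sub_sub_cancel_left, pow_succ, pow_succ]
  linear_combination h

lemma monotone_dyadicRescale (n : ℕ) : Monotone (dyadicRescale n) := fun _ _ h =>
  mul_le_mul_of_nonneg_left (by linarith) (by positivity)

lemma continuous_dyadicRescale (n : ℕ) : Continuous (dyadicRescale n) :=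
  continuous_const.mul (continuous_id.sub continuous_const)

lemma mapsTo_dyadicRescale (n : ℕ) :
    MapsTo (dyadicRescale n) (Icc (dyadicPt n) (dyadicPt (n + 1))) (Icc 0 1) := fun _ ht => by
  rw [← dyadicRescale_dyadicPt n, ← dyadicRescale_dyadicPt_succ n]
  exact ⟨monotone_dyadicRescale n ht.1, monotone_dyadicRescale n ht.2⟩

variable {X Y : Type*} {f : ℕ → X → ℝ → Y} {v : X → Y} {x : X} {t : ℝ}

def glue (f : ℕ → X → ℝ → Y) (v : X → Y) (x : X) (t : ℝ) : Y :=
  if h : t < 1 then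
    -- for `0 ≤ t`, this is the `n` with `t ∈ [dyadicPt n, dyadicPt (n + 1))`
    let n := Nat.find (exists_lt_dyadicPt_succ h)
    f n x (dyadicRescale n t)
  else v x

lemma glue_one : glue f v x 1 = v x := by simp [glue]

lemma glue_eq_of_mem_Ico {n : ℕ} (ht : t ∈ Ico (dyadicPt n) (dyadicPt (n + 1))) :
    glue f v x t = f n x (dyadicRescale n t) := by
  have h1 : t < 1 := ht.2.trans (dyadicPt_lt_one _)
  have hn : Nat.find (exists_lt_dyadicPt_succ h1) = n :=
    (Nat.find_eq_iff _).2 ⟨ht.2, fun m hm =>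
      not_lt.2 ((dyadicPt_strictMono.monotone (Nat.succ_le_of_lt hm)).trans ht.1)⟩
  simp only [glue, dif_pos h1, hn]

lemma glue_eq_of_mem_Icc (hcompat : ∀ n x, f n x 1 = f (n + 1) x 0) {n : ℕ}
    (ht : t ∈ Icc (dyadicPt n) (dyadicPt (n + 1))) :
    glue f v x t = f n x (dyadicRescale n t) := by
  rcases ht.2.lt_or_eq with hlt | rfl
  · exact glue_eq_of_mem_Ico ⟨ht.1, hlt⟩
  · rw [glue_eq_of_mem_Ico ⟨le_rfl, dyadicPt_strictMono (n + 1).lt_succ_self⟩,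
      dyadicRescale_dyadicPt, dyadicRescale_dyadicPt_succ, hcompat]

lemma glue_eq_of_forall_ge {N : ℕ} (hN : ∀ j ≥ N, ∀ s ∈ Icc (0 : ℝ) 1, f j x s = v x)
    (ht : t ∈ Icc (dyadicPt N) 1) : glue f v x t = v x := by
  rcases ht.2.lt_or_eq with hlt | rfl
  · obtain ⟨n, hn⟩ := exists_mem_Ico_dyadicPt ((dyadicPt_nonneg N).trans ht.1) hlt
    have hNn : N ≤ n := Nat.lt_succ_iff.1 (dyadicPt_strictMono.lt_iff_lt.1 (ht.1.trans_lt hn.2))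
    rw [glue_eq_of_mem_Ico hn]
    exact hN n hNn _ (mapsTo_dyadicRescale n (Ico_subset_Icc_self hn))
  · exact glue_one

variable [TopologicalSpace X] [TopologicalSpace Y]
  (hcont : ∀ n, ContinuousOn (uncurry (f n)) (univ ×ˢ Icc 0 1))
include hcont

lemma continuousWithinAt_glue_one (p : X) {U : Set X} (hU : U ∈ 𝓝 p) {N : ℕ}
    (hN : ∀ j ≥ N, ∀ x ∈ U, ∀ s ∈ Icc (0 : ℝ) 1, f j x s = v x) :
    ContinuousWithinAt (uncurry (glue f v)) (univ ×ˢ Icc 0 1) (p, 1) := by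
  have hconst : Continuous fun q : X × ℝ => f N q.1 0 :=
    ((hcont N).comp_continuous (continuous_id.prodMk continuous_const)
      fun _ => ⟨trivial, left_mem_Icc.2 zero_le_one⟩).comp continuous_fst
  have heq : EqOn (uncurry (glue f v)) (fun q => f N q.1 0) (U ×ˢ Icc (dyadicPt N) 1) :=
    fun q hq => (glue_eq_of_forall_ge (fun j hj => hN j hj q.1 hq.1) hq.2).trans
      (hN N le_rfl q.1 hq.1 0 (left_mem_Icc.2 zero_le_one)).symm
  refine (hconst.continuousOn.congr heq (p, 1)
    ⟨mem_of_mem_nhds hU, (dyadicPt_lt_one N).le, le_rfl⟩).mono_of_mem_nhdsWithin ?_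
  filter_upwards [self_mem_nhdsWithin,
    mem_nhdsWithin_of_mem_nhds (prod_mem_nhds hU (Ioi_mem_nhds (dyadicPt_lt_one N)))]
    with q hq hq'
  exact ⟨hq'.1, le_of_lt hq'.2, hq.2.2⟩

variable (hcompat : ∀ n x, f n x 1 = f (n + 1) x 0)
include hcompat

lemma continuousOn_glue_piece (n : ℕ) :
    ContinuousOn (uncurry (glue f v)) (univ ×ˢ Icc (dyadicPt n) (dyadicPt (n + 1))) := by
  have hpiece : ContinuousOn (fun p : X × ℝ => f n p.1 (dyadicRescale n p.2))
      (univ ×ˢ Icc (dyadicPt n) (dyadicPt (n + 1))) :=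
    (hcont n).comp
      (continuous_fst.prodMk ((continuous_dyadicRescale n).comp continuous_snd)).continuousOn
      fun p hp => ⟨trivial, mapsTo_dyadicRescale n hp.2⟩
  exact hpiece.congr fun p hp => glue_eq_of_mem_Icc hcompat hp.2

lemma continuousOn_glue_Icc_zero_dyadicPt (n : ℕ) :
    ContinuousOn (uncurry (glue f v)) (univ ×ˢ Icc 0 (dyadicPt n)) := by
  induction n with
  | zero =>
    refine (continuousOn_glue_piece hcont hcompat 0).mono (prod_mono subset_rfl ?_)
    rw [dyadicPt_zero]
    exact Icc_subset_Icc_right (dyadicPt_nonneg 1)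
  | succ n ih =>
    rw [← Icc_union_Icc_eq_Icc (dyadicPt_nonneg n) (dyadicPt_strictMono.monotone n.le_succ),
      prod_union]
    exact ih.union_of_isClosed (continuousOn_glue_piece hcont hcompat n)
      (isClosed_univ.prod isClosed_Icc) (isClosed_univ.prod isClosed_Icc)

lemma continuousWithinAt_glue_of_lt_one (p : X) (ht : t ∈ Ico 0 1) :
    ContinuousWithinAt (uncurry (glue f v)) (univ ×ˢ Icc 0 1) (p, t) := by
  obtain ⟨n, hn⟩ := exists_lt_dyadicPt ht.2
  refine (continuousOn_glue_Icc_zero_dyadicPt hcont hcompat n (p, t)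
    ⟨trivial, ht.1, hn.le⟩).mono_of_mem_nhdsWithin ?_
  filter_upwards [self_mem_nhdsWithin,
    mem_nhdsWithin_of_mem_nhds (prod_mem_nhds univ_mem (Iio_mem_nhds hn))] with q hq hq'
  exact ⟨trivial, hq.2.1, le_of_lt hq'.2⟩

theorem continuousOn_glue
    (hstab : ∀ p : X, ∃ U ∈ 𝓝 p, ∃ N, ∀ j ≥ N, ∀ x ∈ U, ∀ s ∈ Icc (0 : ℝ) 1, f j x s = v x) :
    ContinuousOn (uncurry (glue f v)) (univ ×ˢ Icc 0 1) := by
  rintro ⟨p, t⟩ ⟨-, ht⟩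
  rcases ht.2.lt_or_eq with hlt | rfl
  · exact continuousWithinAt_glue_of_lt_one hcont hcompat p ⟨ht.1, hlt⟩
  · obtain ⟨U, hU, N, hN⟩ := hstab p
    exact continuousWithinAt_glue_one hcont p hU hN

end DyadicGluing

open DyadicGluing

theorem glued_homotopy_extends
    {X Y : Type*} [TopologicalSpace X] [TopologicalSpace Y]
    (H : ℕ → X → ℝ → Y)
    (hcont : ∀ i, 1 ≤ i →
      ContinuousOn (fun p : X × ℝ => H i p.1 p.2) (univ ×ˢ Icc (0:ℝ) 1))
    (hcompat : ∀ i, 1 ≤ i → ∀ x : X, H i x 1 = H (i + 1) x 0)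
    (hstab : ∀ p : X, ∃ U : Set X, IsOpen U ∧ p ∈ U ∧ ∃ N : ℕ, 1 ≤ N ∧
      ∀ j, N ≤ j → ∀ x ∈ U, ∀ t ∈ Icc (0:ℝ) 1, H j x t = H N x 0) :
    ∃ Hbar : X × (Icc (0:ℝ) 1) → Y,
      Continuous Hbar ∧
      (∀ i, 1 ≤ i → ∀ (x : X) (t : Icc (0:ℝ) 1),
        (t : ℝ) ∈ Icc (1 - (1/2 : ℝ) ^ (i - 1)) (1 - (1/2 : ℝ) ^ i) →
        Hbar (x, t) = H i x ((2 : ℝ) ^ i * ((t : ℝ) - (1 - (1/2 : ℝ) ^ (i - 1))))) ∧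
      (∀ (U : Set X) (N : ℕ), IsOpen U → 1 ≤ N →
        (∀ j, N ≤ j → ∀ x ∈ U, ∀ t ∈ Icc (0:ℝ) 1, H j x t = H N x 0) →
        ∀ x ∈ U, Hbar (x, ⟨1, right_mem_Icc.mpr zero_le_one⟩) = H N x 0) := by
  choose U hUo hpU N _ hN using hstab
  have h0 : (0 : ℝ) ∈ Icc (0 : ℝ) 1 := left_mem_Icc.2 zero_le_one
  have eventual_value : ∀ (V : Set X) (M : ℕ),
      (∀ j, M ≤ j → ∀ x ∈ V, ∀ t ∈ Icc (0:ℝ) 1, H j x t = H M x 0) →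
      ∀ x ∈ V, H (N x) x 0 = H M x 0 := fun V M hM x hx => by
    rw [← hN x _ (le_max_left _ M) x (hpU x) 0 h0, hM _ (le_max_right _ _) x hx 0 h0]
  have hstab' : ∀ p : X, ∃ V ∈ 𝓝 p, ∃ M, ∀ j ≥ M, ∀ x ∈ V, ∀ s ∈ Icc (0 : ℝ) 1,
      H (j + 1) x s = H (N x) x 0 := fun p =>
    ⟨U p, (hUo p).mem_nhds (hpU p), N p, fun j hj x hx s hs =>
      (hN p (j + 1) (by omega) x hx s hs).trans (eventual_value _ _ (hN p) x hx).symm⟩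
  have hcompat' : ∀ n x, H (n + 1) x 1 = H (n + 1 + 1) x 0 := fun n => hcompat (n + 1) n.succ_pos
  have hglue := continuousOn_glue (fun n => hcont (n + 1) n.succ_pos) hcompat' hstab'
  refine ⟨fun q : X × Icc (0 : ℝ) 1 => glue (fun n => H (n + 1)) (fun x => H (N x) x 0) q.1 q.2,
    hglue.comp_continuous (continuous_fst.prodMk (continuous_subtype_val.comp continuous_snd))
      fun q => ⟨trivial, q.2.2⟩, ?_, ?_⟩
  · intro i hi x t ht
    obtain ⟨n, rfl⟩ := Nat.exists_eq_add_of_le' hi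
    exact glue_eq_of_mem_Icc hcompat' ht
  · intro V M _ _ hM x hx
    exact glue_one.trans (eventual_value V M hM x hx)
end
end

section
/- For every m \ge 1, the set A_m is disjoint from the closure (in \mathbb{R}^2) of the union of all the other segments: A_m \cap \overline{\bigcup_{n \ge 1,\ n \ne m} A_n} = \emptyset. -/
/-!
In polar coordinates `A_n` is the segment `(0, 1) × {1/n}`. The angles `1/n` with `n ≠ m` stay
at distance at least `1/(m(m+1))` from `1/m`, so all the other segments lie in the sector over a
compact set of angles `K ∌ 1/m`. That sector is a compact image of `[0, 1] × K`, hence closed, and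
polar coordinates are injective away from the origin, so it misses the ray at angle `1/m`.
-/

/-- The open straight segment from the origin to `(cos(1/n), sin(1/n))`. -/
def raySeg (n : ℕ) : Set (ℝ × ℝ) :=
  {p | ∃ t : ℝ, 0 < t ∧ t < 1 ∧
    p = (t * Real.cos (1 / (n : ℝ)), t * Real.sin (1 / (n : ℝ)))}

open Set Real

theorem raySeg_eq_polarCoord_symm_image (n : ℕ) :
    raySeg n = polarCoord.symm '' (Ioo 0 1 ×ˢ {1 / (n : ℝ)}) := by
  ext p
  simp only [raySeg, mem_ofPred_eq, mem_image, mem_prod, mem_Ioo, mem_singleton_iff,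
    Prod.exists, polarCoord_symm_apply]
  constructor
  · rintro ⟨t, ht0, ht1, rfl⟩
    exact ⟨t, _, ⟨⟨ht0, ht1⟩, rfl⟩, rfl⟩
  · rintro ⟨t, _, ⟨⟨ht0, ht1⟩, rfl⟩, rfl⟩
    exact ⟨t, ht0, ht1, rfl⟩

theorem isClosed_polarCoord_symm_image_Icc_prod {K : Set ℝ} (hK : IsCompact K) (R : ℝ) :
    IsClosed (polarCoord.symm '' (Icc 0 R ×ˢ K)) :=
  have hcont : Continuous polarCoord.symm := by
    change Continuous fun p : ℝ × ℝ => (p.1 * cos p.2, p.1 * sin p.2)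
    fun_prop
  ((isCompact_Icc.prod hK).image hcont).isClosed

theorem disjoint_polarCoord_symm_ray_closure_sector {K : Set ℝ} (hK : IsCompact K)
    (hKπ : K ⊆ Ioo (-π) π) {θ : ℝ} (hθ : θ ∈ Ioo (-π) π) (hθK : θ ∉ K) (R : ℝ) :
    Disjoint (polarCoord.symm '' (Ioi 0 ×ˢ {θ}))
      (closure (polarCoord.symm '' (Icc 0 R ×ˢ K))) := by
  rw [(isClosed_polarCoord_symm_image_Icc_prod hK R).closure_eq, Set.disjoint_left]
  rintro _ ⟨⟨r, _⟩, ⟨hr, rfl⟩, rfl⟩ ⟨⟨r', θ'⟩, ⟨hr', hθ'⟩, heq⟩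
  have hpolar := congrArg polarCoord heq
  rw [polarCoord.right_inv ⟨hr, hθ⟩] at hpolar
  rcases hr'.1.eq_or_lt with rfl | hr'
  · exact hr.out.ne (by simpa using congrArg Prod.fst hpolar)
  · rw [polarCoord.right_inv ⟨hr', hKπ hθ'⟩, Prod.ext_iff] at hpolar
    exact hθK (hpolar.2 ▸ hθ')

theorem one_div_natCast_mem_Icc (n : ℕ) : 1 / (n : ℝ) ∈ Icc 0 1 := by
  rcases n.eq_zero_or_pos with rfl | hn
  · simp
  · exact ⟨by positivity, div_le_one_of_le₀ (by exact_mod_cast hn) (by positivity)⟩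

theorem one_div_mul_add_one_le_abs_one_div_sub {m n : ℕ} (hm : 1 ≤ m) (hn : 1 ≤ n)
    (hnm : n ≠ m) : 1 / ((m : ℝ) * (m + 1)) ≤ |1 / (n : ℝ) - 1 / m| := by
  have hm' : (1 : ℝ) ≤ m := by exact_mod_cast hm
  have hn' : (1 : ℝ) ≤ n := by exact_mod_cast hn
  rcases hnm.lt_or_gt with h | h
  · have h' : (n : ℝ) + 1 ≤ m := by exact_mod_cast h
    rw [abs_of_nonneg (sub_nonneg.2 (by gcongr)), div_sub_div _ _ (by positivity) (by positivity),
      div_le_div_iff₀ (by positivity) (by positivity)]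
    nlinarith [mul_nonneg (mul_nonneg (sub_nonneg.2 h') (by positivity : (0 : ℝ) ≤ m))
        (by positivity : (0 : ℝ) ≤ m + 1),
      mul_nonneg (by positivity : (0 : ℝ) ≤ m) (by linarith : (0 : ℝ) ≤ m + 1 - n)]
  · have h' : (m : ℝ) + 1 ≤ n := by exact_mod_cast h
    rw [abs_sub_comm, abs_of_nonneg (sub_nonneg.2 (by gcongr)),
      div_sub_div _ _ (by positivity) (by positivity),
      div_le_div_iff₀ (by positivity) (by positivity)]
    nlinarith [mul_nonneg (by positivity : (0 : ℝ) ≤ m) (sub_nonneg.2 h')]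

theorem raySeg_disjoint_closure_of_others :
    ∀ m : ℕ, 1 ≤ m →
      raySeg m ∩ closure (⋃ (n : ℕ) (_ : 1 ≤ n) (_ : n ≠ m), raySeg n) = ∅ := by
  intro m hm
  set K := Icc 0 1 \ Metric.ball (1 / (m : ℝ)) (1 / ((m : ℝ) * (m + 1)))
  have hKπ : ∀ θ ∈ Icc (0 : ℝ) 1, θ ∈ Ioo (-π) π := fun θ hθ =>
    ⟨by linarith [hθ.1, pi_pos], by linarith [hθ.2, pi_gt_three]⟩
  have hmK : 1 / (m : ℝ) ∉ K := fun h => h.2 (Metric.mem_ball_self (by positivity))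
  have hray : raySeg m ⊆ polarCoord.symm '' (Ioi 0 ×ˢ {1 / (m : ℝ)}) :=
    raySeg_eq_polarCoord_symm_image m ▸ image_mono (prod_mono Ioo_subset_Ioi_self le_rfl)
  have hothers : (⋃ (n : ℕ) (_ : 1 ≤ n) (_ : n ≠ m), raySeg n) ⊆
      polarCoord.symm '' (Icc 0 1 ×ˢ K) := by
    simp only [iUnion_subset_iff]
    intro n hn hnm
    rw [raySeg_eq_polarCoord_symm_image]
    refine image_mono (prod_mono Ioo_subset_Icc_self ?_)
    rintro _ rfl
    refine ⟨one_div_natCast_mem_Icc n, ?_⟩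
    simpa [Real.dist_eq] using one_div_mul_add_one_le_abs_one_div_sub hm hn hnm
  exact ((disjoint_polarCoord_symm_ray_closure_sector (isCompact_Icc.diff Metric.isOpen_ball)
    (fun θ hθ => hKπ θ hθ.1) (hKπ _ (one_div_natCast_mem_Icc m)) hmK 1).mono hray
    (closure_mono hothers)).inter_eq
end

section
/- Let P = \{(0,0),\ (1,0)\} \cup \{ (\cos(1/n), \sin(1/n)) : n \ge 1 \} \subseteq \mathbb{R}^2 and let S = \mathbb{R}^2 \setminus P with the subspace topology (each A_n is a subset of S). Then there is no homeomorphism h : S \to S such that h(A_n) = A_n for all n \ge 2 and such that h(A_1) contains a point (x, 0) with 0 < x < 1. -/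
/-- The set of punctures: the origin, `(1,0)`, and the endpoints
`(cos(1/n), sin(1/n))` on the unit circle. -/
def punctures : Set (ℝ × ℝ) :=
  {((0:ℝ), (0:ℝ)), ((1:ℝ), (0:ℝ))} ∪
    {p | ∃ n : ℕ, 1 ≤ n ∧ p = (Real.cos (1 / (n : ℝ)), Real.sin (1 / (n : ℝ)))}

open Filter Topology Real

lemma sq_add_sq_mem_Ioo_of_mem_raySeg {n : ℕ} {p : ℝ × ℝ} (hp : p ∈ raySeg n) :
    p.1 ^ 2 + p.2 ^ 2 ∈ Set.Ioo 0 1 := by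
  obtain ⟨t, ht0, ht1, rfl⟩ := hp
  have hsq : (t * cos (1 / n)) ^ 2 + (t * sin (1 / n)) ^ 2 = t ^ 2 := by
    linear_combination t ^ 2 * cos_sq_add_sin_sq (1 / (n : ℝ))
  rw [hsq]
  exact ⟨by positivity, by nlinarith⟩

lemma sq_add_sq_of_mem_punctures {p : ℝ × ℝ} (hp : p ∈ punctures) :
    p.1 ^ 2 + p.2 ^ 2 = 0 ∨ p.1 ^ 2 + p.2 ^ 2 = 1 := by
  rcases hp with (rfl | rfl) | ⟨n, -, rfl⟩
  · left; norm_num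
  · right; norm_num
  · right; exact cos_sq_add_sin_sq _

lemma raySeg_subset_compl_punctures (n : ℕ) : raySeg n ⊆ puncturesᶜ := by
  intro p hp hpunct
  obtain ⟨hpos, hlt⟩ := sq_add_sq_mem_Ioo_of_mem_raySeg hp
  rcases sq_add_sq_of_mem_punctures hpunct with h | h
  · exact hpos.ne' h
  · exact hlt.ne h

lemma abs_snd_le_of_mem_raySeg {n : ℕ} {p : ℝ × ℝ} (hp : p ∈ raySeg n) :
    |p.2| ≤ 1 / n := by
  obtain ⟨t, ht0, ht1, rfl⟩ := hp
  calc |t * sin (1 / n)| = t * |sin (1 / n)| := by rw [abs_mul, abs_of_pos ht0]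
    _ ≤ 1 * |(1 : ℝ) / n| := mul_le_mul ht1.le abs_sin_le_abs (abs_nonneg _) zero_le_one
    _ = 1 / n := by rw [one_mul, abs_of_nonneg (by positivity)]

lemma snd_pos_of_mem_raySeg {n : ℕ} (hn : 1 ≤ n) {p : ℝ × ℝ} (hp : p ∈ raySeg n) :
    0 < p.2 := by
  obtain ⟨t, ht0, -, rfl⟩ := hp
  have hn' : (1 : ℝ) ≤ n := by exact_mod_cast hn
  have hle : (1 : ℝ) / n ≤ 1 := (div_le_one (by positivity)).mpr hn'
  exact mul_pos ht0 (sin_pos_of_pos_of_lt_pi (by positivity) (by linarith [pi_gt_three]))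

lemma snd_eq_zero_of_tendsto_of_mem_raySeg {ι : Type*} {l : Filter ι} [l.NeBot]
    {m : ι → ℕ} {u : ι → ℝ × ℝ} {a : ℝ × ℝ} (hm : Tendsto m l atTop)
    (hu : ∀ i, u i ∈ raySeg (m i)) (hua : Tendsto u l (𝓝 a)) : a.2 = 0 :=
  tendsto_nhds_unique ((continuous_snd.tendsto a).comp hua) <|
    squeeze_zero_norm (fun i => abs_snd_le_of_mem_raySeg (hu i))
      (tendsto_one_div_atTop_nhds_zero_nat.comp hm)

lemma tendsto_mul_cos_mul_sin_one_div {ι : Type*} {l : Filter ι} {m : ι → ℕ}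
    (hm : Tendsto m l atTop) (x : ℝ) :
    Tendsto (fun i => (x * cos (1 / m i), x * sin (1 / m i))) l (𝓝 (x, 0)) := by
  have hcont : Continuous fun θ : ℝ => (x * cos θ, x * sin θ) := by fun_prop
  simpa [Function.comp_def] using
    (hcont.tendsto 0).comp (tendsto_one_div_atTop_nhds_zero_nat.comp hm)

theorem no_homeomorphism_moving_first_arc :
    ¬ ∃ h : (puncturesᶜ : Set (ℝ × ℝ)) ≃ₜ (puncturesᶜ : Set (ℝ × ℝ)),
      (∀ n : ℕ, 2 ≤ n →
        h '' {p : (puncturesᶜ : Set (ℝ × ℝ)) | (p : ℝ × ℝ) ∈ raySeg n} =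
          {p : (puncturesᶜ : Set (ℝ × ℝ)) | (p : ℝ × ℝ) ∈ raySeg n}) ∧
      ∃ x : ℝ, 0 < x ∧ x < 1 ∧
        ∃ p : (puncturesᶜ : Set (ℝ × ℝ)),
          (p : ℝ × ℝ) ∈ raySeg 1 ∧ ((h p : ℝ × ℝ)) = (x, 0) := by
  rintro ⟨h, hfix, x, hx0, hx1, p, hp1, hpx⟩
  have hm : Tendsto (· + 2) atTop atTop := tendsto_add_atTop_nat 2
  have hq_mem (k : ℕ) :
      (x * cos (1 / (k + 2 : ℕ)), x * sin (1 / (k + 2 : ℕ))) ∈ raySeg (k + 2) :=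
    ⟨x, hx0, hx1, rfl⟩
  let q (k : ℕ) : (puncturesᶜ : Set (ℝ × ℝ)) :=
    ⟨_, raySeg_subset_compl_punctures _ (hq_mem k)⟩
  have hq_lim : Tendsto q atTop (𝓝 (h p)) :=
    tendsto_subtype_rng.mpr (hpx ▸ tendsto_mul_cos_mul_sin_one_div hm x)
  have hpull_lim : Tendsto (fun k => (h.symm (q k) : ℝ × ℝ)) atTop (𝓝 p) := by
    have := (h.symm.continuous.tendsto (h p)).comp hq_lim
    rw [h.symm_apply_apply] at this
    exact tendsto_subtype_rng.mp this
  have hpull_mem (k : ℕ) : (h.symm (q k) : ℝ × ℝ) ∈ raySeg (k + 2) := by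
    have : q k ∈ h '' {p | (p : ℝ × ℝ) ∈ raySeg (k + 2)} := by
      rw [hfix _ (by omega)]; exact hq_mem k
    rwa [← h.preimage_symm] at this
  exact (snd_pos_of_mem_raySeg le_rfl hp1).ne'
    (snd_eq_zero_of_tendsto_of_mem_raySeg hm hpull_mem hpull_lim)
end
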